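/- In the Rayleigh case with Ψ having eigenvalues λ_1,…,λ_N ≥ 0, the NMSE equals (σ²/(τρ)) · Σ_i λ_i/(q λ_i + σ²/(τρ)) / Σ_i λ_i, which is strictly decreasing in the training power τρ when Ψ ≠ 0. -/

import Mathlib

/-! Diagonalizing `Ψ = U diag(λ) Uᴴ` turns `Ψ (qΨ + c)⁻¹ Ψ` into `U diag(λ² / (qλ + c)) Uᴴ`, and
`λ - qλ² / (qλ + c) = cλ / (qλ + c)` gives the formula, with `c = σ² / (τρ)`. Each summand
`λ · c / (qλ + c)` is nondecreasing in `c`, strictly when `λ > 0`, and `c` decreases in `τρ`. -/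

open Matrix
open scoped Matrix ComplexOrder

open Finset Unitary

lemma div_add_le_div_add {a c₁ c₂ : ℝ} (ha : 0 ≤ a) (hc₁ : 0 < c₁) (h : c₁ ≤ c₂) :
    c₁ / (a + c₁) ≤ c₂ / (a + c₂) := by
  rw [div_le_div_iff₀ (by positivity) (by linarith)]
  nlinarith

lemma div_add_lt_div_add {a c₁ c₂ : ℝ} (ha : 0 < a) (hc₁ : 0 < c₁) (h : c₁ < c₂) :
    c₁ / (a + c₁) < c₂ / (a + c₂) := by
  rw [div_lt_div_iff₀ (by positivity) (by linarith)]
  nlinarith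

section Scalar

variable {ι : Type*} {s : Finset ι} {l : ι → ℝ} {q : ℝ}

lemma one_sub_mul_sum_sq_div_div_sum {c : ℝ} (hc : ∀ i ∈ s, q * l i + c ≠ 0)
    (hl : ∑ i ∈ s, l i ≠ 0) :
    1 - q * (∑ i ∈ s, l i ^ 2 / (q * l i + c)) / ∑ i ∈ s, l i =
      c * (∑ i ∈ s, l i / (q * l i + c)) / ∑ i ∈ s, l i := by
  have hsum : ∑ i ∈ s, l i - q * ∑ i ∈ s, l i ^ 2 / (q * l i + c) =
      c * ∑ i ∈ s, l i / (q * l i + c) := by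
    rw [mul_sum, mul_sum, ← sum_sub_distrib]
    refine sum_congr rfl fun i hi ↦ ?_
    rw [mul_div_assoc', mul_div_assoc', eq_div_iff (hc i hi), sub_mul,
      div_mul_cancel₀ _ (hc i hi)]
    ring
  rw [← hsum]
  field_simp

lemma strictMonoOn_mul_sum_div_add (hq : 0 < q) (hl : ∀ i ∈ s, 0 ≤ l i)
    (hpos : ∃ i ∈ s, 0 < l i) :
    StrictMonoOn (fun c ↦ c * ∑ i ∈ s, l i / (q * l i + c)) (Set.Ioi 0) := by
  intro c₁ hc₁ c₂ hc₂ h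
  have hterm (c : ℝ) :
      c * ∑ i ∈ s, l i / (q * l i + c) = ∑ i ∈ s, l i * (c / (q * l i + c)) := by
    rw [mul_sum]
    exact sum_congr rfl fun i _ ↦ by ring
  simp only [hterm]
  obtain ⟨i₀, hi₀, hli₀⟩ := hpos
  refine sum_lt_sum (fun i hi ↦ ?_) ⟨i₀, hi₀, ?_⟩
  · exact mul_le_mul_of_nonneg_left
      (div_add_le_div_add (mul_nonneg hq.le (hl i hi)) hc₁ h.le) (hl i hi)
  · exact mul_lt_mul_of_pos_left (div_add_lt_div_add (mul_pos hq hli₀) hc₁ h) hli₀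

end Scalar

namespace Matrix

section Conjugation

variable {n R : Type*} [Fintype n] [DecidableEq n] [CommRing R] [StarRing R]

lemma trace_conjStarAlgAut (U : unitary (Matrix n n R)) (X : Matrix n n R) :
    (conjStarAlgAut R _ U X).trace = X.trace := by
  rw [conjStarAlgAut_apply, trace_mul_cycle, coe_star_mul_self, one_mul]

lemma inv_conjStarAlgAut (U : unitary (Matrix n n R)) (X : Matrix n n R) :
    (conjStarAlgAut R _ U X)⁻¹ = conjStarAlgAut R _ U X⁻¹ := by
  have hU : (U : Matrix n n R)⁻¹ = star (U : Matrix n n R) :=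
    inv_eq_left_inv (coe_star_mul_self U)
  have hU' : (star U : Matrix n n R)⁻¹ = U := inv_eq_left_inv (coe_mul_star_self U)
  rw [conjStarAlgAut_apply, conjStarAlgAut_apply, mul_inv_rev, mul_inv_rev, hU, hU', mul_assoc]

end Conjugation

lemma inv_diagonal_of_ne_zero {n K : Type*} [Fintype n] [DecidableEq n] [Field K] {d : n → K}
    (hd : ∀ i, d i ≠ 0) : (diagonal d)⁻¹ = diagonal fun i ↦ (d i)⁻¹ :=
  inv_eq_left_inv <| by
    rw [diagonal_mul_diagonal, ← diagonal_one]
    exact congrArg diagonal <| funext fun i ↦ inv_mul_cancel₀ (hd i)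

variable {n 𝕜 : Type*} [Fintype n] [DecidableEq n] [RCLike 𝕜] {A : Matrix n n 𝕜}

lemma IsHermitian.trace_mul_inv_smul_add_smul_one_mul (hA : A.IsHermitian) {a b : ℝ}
    (h : ∀ i, a * hA.eigenvalues i + b ≠ 0) :
    (A * ((a : 𝕜) • A + (b : 𝕜) • 1)⁻¹ * A).trace =
      ((∑ i, hA.eigenvalues i ^ 2 / (a * hA.eigenvalues i + b) : ℝ) : 𝕜) := by
  set l := hA.eigenvalues
  obtain ⟨U, hA'⟩ : ∃ U : unitary (Matrix n n 𝕜),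
      A = conjStarAlgAut 𝕜 _ U (diagonal fun i ↦ (l i : 𝕜)) := ⟨_, hA.spectral_theorem⟩
  have hshift : (a : 𝕜) • A + (b : 𝕜) • 1 =
      conjStarAlgAut 𝕜 _ U (diagonal fun i ↦ ((a * l i + b : ℝ) : 𝕜)) := by
    rw [hA', ← map_one (conjStarAlgAut 𝕜 _ U), ← map_smul, ← map_smul, ← map_add,
      ← diagonal_smul, smul_one_eq_diagonal, diagonal_add]
    push_cast
    rfl
  -- `hA.eigenvalues` depends on `A`; forgetting it makes `A` rewritable
  clear_value l
  rw [hshift, inv_conjStarAlgAut, inv_diagonal_of_ne_zero (fun i ↦ RCLike.ofReal_ne_zero.2 (h i)),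
    hA', ← map_mul, ← map_mul, trace_conjStarAlgAut, diagonal_mul_diagonal,
    diagonal_mul_diagonal, trace_diagonal]
  push_cast
  refine sum_congr rfl fun i _ ↦ ?_
  ring

lemma PosSemidef.exists_eigenvalues_pos (hA : A.PosSemidef) (h : A ≠ 0) :
    ∃ i, 0 < hA.1.eigenvalues i := by
  obtain ⟨i, hi⟩ := Function.ne_iff.1 (mt hA.1.eigenvalues_eq_zero_iff.1 h)
  exact ⟨i, (hA.eigenvalues_nonneg i).lt_of_ne' hi⟩

lemma PosSemidef.one_sub_mul_trace_mul_inv_mul_div_trace (hA : A.PosSemidef) (h : A ≠ 0)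
    {q c : ℝ} (hq : 0 ≤ q) (hc : 0 < c) :
    1 - (q : 𝕜) * (A * ((q : 𝕜) • A + (c : 𝕜) • 1)⁻¹ * A).trace / A.trace =
      ((c * (∑ i, hA.1.eigenvalues i / (q * hA.1.eigenvalues i + c)) /
        ∑ i, hA.1.eigenvalues i : ℝ) : 𝕜) := by
  have hden : ∀ i ∈ univ, q * hA.1.eigenvalues i + c ≠ 0 := fun i _ ↦
    (add_pos_of_nonneg_of_pos (mul_nonneg hq (hA.eigenvalues_nonneg i)) hc).ne'
  obtain ⟨i₀, hi₀⟩ := hA.exists_eigenvalues_pos h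
  have htrace : ∑ i, hA.1.eigenvalues i ≠ 0 :=
    (sum_pos' (fun i _ ↦ hA.eigenvalues_nonneg i) ⟨i₀, mem_univ _, hi₀⟩).ne'
  rw [hA.1.trace_mul_inv_smul_add_smul_one_mul (fun i ↦ hden i (mem_univ i)),
    hA.1.trace_eq_sum_eigenvalues, ← one_sub_mul_sum_sq_div_div_sum hden htrace]
  push_cast
  rfl

end Matrix

/-- In the Rayleigh case, with Ψ Hermitian PSD of eigenvalues λ_i ≥ 0, the NMSE
1 − q tr(ΨQΨ)/tr(Ψ) equals (σ²/(τρ)) Σ_i λ_i/(qλ_i + σ²/(τρ)) / Σ_i λ_i, and is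
strictly decreasing in the training power p = τρ when Ψ ≠ 0. -/
theorem nmse_eigenvalue_formula_and_monotone {N : ℕ}
    (Ψ : Matrix (Fin N) (Fin N) ℂ) (hΨ : Ψ.PosSemidef) (hΨ0 : Ψ ≠ 0)
    (q σ2 : ℝ) (hq : 0 < q) (hσ : 0 < σ2)
    (NMSE : ℝ → ℂ)
    (hN : ∀ p : ℝ, NMSE p = 1 - (q : ℂ) *
      (Ψ * ((q : ℂ) • Ψ + (((σ2 / p : ℝ)) : ℂ) • (1 : Matrix (Fin N) (Fin N) ℂ))⁻¹ *
        Ψ).trace / Ψ.trace) :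
    (∀ p : ℝ, 0 < p → NMSE p =
      ((((σ2 / p) * ∑ i, hΨ.1.eigenvalues i / (q * hΨ.1.eigenvalues i + σ2 / p)) /
        ∑ i, hΨ.1.eigenvalues i : ℝ) : ℂ)) ∧
    (∀ p1 p2 : ℝ, 0 < p1 → p1 < p2 → (NMSE p2).re < (NMSE p1).re) := by
  have formula (p : ℝ) (hp : 0 < p) :=
    (hN p).trans (hΨ.one_sub_mul_trace_mul_inv_mul_div_trace hΨ0 hq.le (div_pos hσ hp))
  refine ⟨formula, fun p1 p2 hp1 h12 ↦ ?_⟩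
  have hp2 := hp1.trans h12
  obtain ⟨i₀, hi₀⟩ := hΨ.exists_eigenvalues_pos hΨ0
  have hl : ∀ i ∈ univ, 0 ≤ hΨ.1.eigenvalues i := fun i _ ↦ hΨ.eigenvalues_nonneg i
  have hmono := strictMonoOn_mul_sum_div_add hq hl ⟨i₀, mem_univ _, hi₀⟩
    (div_pos hσ hp2) (div_pos hσ hp1) (div_lt_div_of_pos_left hσ hp1 h12)
  rw [formula p1 hp1, formula p2 hp2, RCLike.ofReal_eq_complex_ofReal, Complex.ofReal_re,
    Complex.ofReal_re]
  exact div_lt_div_of_pos_right hmono (sum_pos' hl ⟨i₀, mem_univ _, hi₀⟩)
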